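/- Let A be a nonnegative weakly irreducible tensor of order m and dimension n with slice sums K_i = sum over all indices i_2,...,i_m of a_{i i_2 ... i_m}. Then the spectral radius rho(A) satisfies min over circuits gamma in the digraph G_A of (prod_{i in gamma} K_i)^{1/|gamma|} <= rho(A) <= max over circuits gamma of (prod_{i in gamma} K_i)^{1/|gamma|}. -/

import Mathlib

/-!
Write `K_i` for the slice sums and `q = m - 1`.

Upper bound: if `A x^q = λ x^{[q]}`, `x ≠ 0`, put `z = |x|`. From a vertex with `z_i > 0` step
to the out-neighbour `s i` of largest `z`; then `|λ| z_i^q ≤ (A z^q)_i ≤ K_i z_{s i}^q`, so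
`z_{s i} > 0`.
The walk closes into a circuit, and multiplying around it gives `|λ|^p ≤ ∏ K`.

Lower bound: if every vertex has an out-arc, then for `r > q` the map `u ↦ log (A (exp u)^q) / r`
is a `q / r`-contraction for the sup distance; its fixed point gives `0 < y ≤ 1`, `max y = 1`, with
`A y^q = λ_r y^{[r]}`. Stepping to out-neighbours of smallest `y` and using `y^r ≤ y^q` gives
`∏ K ≤ λ_r^p` on a circuit, and a limit point of `(λ_r, y)` as `r → q` is an eigenpair of `A`.
If some vertex has no out-arc, weak irreducibility leaves no circuit, and `sInf ∅ = 0`.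
-/

open scoped BigOperators
open Finset

/-- The arc relation of the digraph `G_A` of an order-`m` dimension-`n` tensor `A`,
    whose entries are indexed by a head index and a tail of `m - 1` indices:
    `(i, j)` is an arc when some entry `a_{i i_2 ... i_m} ≠ 0` has `j` among `i_2, ..., i_m`. -/
def tArc (m n : ℕ) (A : Fin n → (Fin (m - 1) → Fin n) → ℝ) (i j : Fin n) : Prop :=
  ∃ t : Fin (m - 1) → Fin n, A i t ≠ 0 ∧ j ∈ Set.range t

/-- A digraph (given by its arc relation) is strongly connected. -/
def StronglyConnected {n : ℕ} (arc : Fin n → Fin n → Prop) : Prop :=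
  ∀ i j : Fin n, Relation.ReflTransGen arc i j

/-- `γ 0, γ 1, ..., γ p = γ 0` is a circuit (closed directed walk, loops allowed)
    of length `p` in the digraph with arc relation `arc`. -/
def IsCircuit {n : ℕ} (arc : Fin n → Fin n → Prop) (p : ℕ) (γ : ℕ → Fin n) : Prop :=
  0 < p ∧ γ p = γ 0 ∧ ∀ j < p, arc (γ j) (γ (j + 1))

/-- `lam` is an eigenvalue of the order-`m` dimension-`n` real tensor `A`:
    there is a nonzero complex vector `x` with `A x^{m-1} = lam x^{[m-1]}`. -/
def IsEig (m n : ℕ) (A : Fin n → (Fin (m - 1) → Fin n) → ℝ) (lam : ℂ) : Prop :=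
  ∃ x : Fin n → ℂ, x ≠ 0 ∧ ∀ i : Fin n,
    ∑ t : Fin (m - 1) → Fin n, (A i t : ℂ) * ∏ j, x (t j) = lam * x i ^ (m - 1)

/-- The spectral radius of a tensor: the supremum of moduli of its eigenvalues. -/
noncomputable def specRad (m n : ℕ) (A : Fin n → (Fin (m - 1) → Fin n) → ℝ) : ℝ :=
  sSup {r : ℝ | ∃ lam : ℂ, IsEig m n A lam ∧ ‖lam‖ = r}

/-- The `i`-th slice sum `K_i = ∑_{i_2,...,i_m} a_{i i_2 ... i_m}`. -/
def sliceSum (m n : ℕ) (A : Fin n → (Fin (m - 1) → Fin n) → ℝ) (i : Fin n) : ℝ :=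
  ∑ t : Fin (m - 1) → Fin n, A i t

/-- `(A x^{m-1})_i = ∑_{i_2,...,i_m} a_{i i_2 ... i_m} x_{i_2} ⋯ x_{i_m}`. -/
def Ax (m n : ℕ) (A : Fin n → (Fin (m - 1) → Fin n) → ℝ) (x : Fin n → ℝ) (i : Fin n) : ℝ :=
  ∑ t : Fin (m - 1) → Fin n, A i t * ∏ j, x (t j)

open Filter Topology

lemma prod_le_prod_of_mul_le_mul_succ {a b y : ℕ → ℝ} {p : ℕ} (ha : ∀ j, 0 ≤ a j)
    (hy : ∀ j, 0 < y j) (hyp : y p = y 0) (h : ∀ j < p, a j * y j ≤ b j * y (j + 1)) :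
    ∏ j ∈ range p, a j ≤ ∏ j ∈ range p, b j := by
  have hshift : ∏ j ∈ range p, y (j + 1) = ∏ j ∈ range p, y j := by
    have h' := prod_range_succ' y p
    rw [prod_range_succ, hyp] at h'
    exact (mul_right_cancel₀ (hy 0).ne' h').symm
  refine le_of_mul_le_mul_right ?_ (prod_pos fun j (_ : j ∈ range p) => hy j)
  calc (∏ j ∈ range p, a j) * ∏ j ∈ range p, y j = ∏ j ∈ range p, a j * y j :=
        prod_mul_distrib.symm
    _ ≤ ∏ j ∈ range p, b j * y (j + 1) :=
        prod_le_prod (fun j _ => mul_nonneg (ha j) (hy j).le) fun j hj => h j (mem_range.1 hj)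
    _ = (∏ j ∈ range p, b j) * ∏ j ∈ range p, y j := by rw [prod_mul_distrib, hshift]

section Circuits

variable {n : ℕ} {arc : Fin n → Fin n → Prop}

lemma exists_arc_forall_le (y : Fin n → ℝ) {i j₀ : Fin n} (h : arc i j₀) :
    ∃ j, arc i j ∧ ∀ j', arc i j' → y j' ≤ y j := by
  classical
  obtain ⟨j, hj, hmax⟩ := exists_max_image (univ.filter (arc i)) y ⟨j₀, by simpa using h⟩
  exact ⟨j, (mem_filter.1 hj).2, fun j' hj' => hmax j' (by simpa using hj')⟩

lemma exists_isCircuit_of_map {P : Fin n → Prop} (s : Fin n → Fin n)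
    (hP : ∀ i, P i → P (s i)) (harc : ∀ i, P i → arc i (s i)) {i₀ : Fin n} (h₀ : P i₀) :
    ∃ p γ, IsCircuit arc p γ ∧ ∀ j, P (γ j) ∧ γ (j + 1) = s (γ j) := by
  have hPiter : ∀ {x} k, P x → P (s^[k] x) := fun k hx => by
    induction k with
    | zero => exact hx
    | succ k ih => rw [Function.iterate_succ_apply']; exact hP _ ih
  obtain ⟨k, l, hkl, heq⟩ : ∃ k l, k < l ∧ s^[l] i₀ = s^[k] i₀ := by
    obtain ⟨k, l, hne, heq⟩ := Finite.exists_ne_map_eq_of_infinite fun k : ℕ => s^[k] i₀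
    rcases hne.lt_or_gt with hlt | hlt
    exacts [⟨k, l, hlt, heq.symm⟩, ⟨l, k, hlt, heq⟩]
  have hsucc : ∀ j, s^[j + 1] (s^[k] i₀) = s (s^[j] (s^[k] i₀)) := fun j =>
    Function.iterate_succ_apply' s j _
  refine ⟨l - k, fun j => s^[j] (s^[k] i₀), ⟨by omega, ?_, fun j _ => ?_⟩,
    fun j => ⟨hPiter j (hPiter k h₀), hsucc j⟩⟩
  · change s^[l - k] (s^[k] i₀) = s^[k] i₀
    rw [← Function.iterate_add_apply, Nat.sub_add_cancel hkl.le, heq]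
  · simp only [hsucc]
    exact harc _ (hPiter j (hPiter k h₀))

lemma not_isCircuit_of_forall_not_arc (hsc : StronglyConnected arc) {i : Fin n}
    (hi : ∀ j, ¬ arc i j) (p : ℕ) (γ : ℕ → Fin n) : ¬ IsCircuit arc p γ := by
  have hall : ∀ j, j = i := fun j => by
    rcases (hsc i j).cases_head with h | ⟨c, hc, -⟩
    exacts [h.symm, absurd hc (hi c)]
  rintro ⟨hp, -, harc⟩
  exact hi _ (hall (γ 0) ▸ harc 0 hp)

end Circuits

section LogCoordinates

variable {ι : Type*} [Fintype ι] {q : ℕ} {B : ι → (Fin q → ι) → ℝ}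

/-- The map `x ↦ B x^q` in logarithmic coordinates `x = exp u`. -/
noncomputable def logAct (B : ι → (Fin q → ι) → ℝ) (u : ι → ℝ) (i : ι) : ℝ :=
  Real.log (∑ t, B i t * Real.exp (∑ k, u (t k)))

lemma sum_mul_exp_pos (hB : ∀ i t, 0 ≤ B i t) (hrow : ∀ i, ∃ t, 0 < B i t) (u : ι → ℝ)
    (i : ι) : 0 < ∑ t, B i t * Real.exp (∑ k, u (t k)) :=
  let ⟨t, ht⟩ := hrow i
  sum_pos' (fun t _ => mul_nonneg (hB i t) (Real.exp_pos _).le)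
    ⟨t, mem_univ _, mul_pos ht (Real.exp_pos _)⟩

lemma logAct_le_add_dist (hB : ∀ i t, 0 ≤ B i t) (hrow : ∀ i, ∃ t, 0 < B i t)
    (u v : ι → ℝ) (i : ι) : logAct B u i ≤ logAct B v i + q * dist u v := by
  have hsum : ∀ t : Fin q → ι, ∑ k, u (t k) ≤ ∑ k, v (t k) + q * dist u v := fun t =>
    calc ∑ k, u (t k) ≤ ∑ k, (v (t k) + dist u v) := sum_le_sum fun k _ => by
          have := dist_le_pi_dist u v (t k)
          rw [Real.dist_eq] at this
          linarith [le_abs_self (u (t k) - v (t k))]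
      _ = _ := by simp [sum_add_distrib]
  rw [logAct, logAct, ← Real.log_exp (q * dist u v),
    ← Real.log_mul (sum_mul_exp_pos hB hrow v i).ne' (Real.exp_pos _).ne', sum_mul]
  refine Real.log_le_log (sum_mul_exp_pos hB hrow u i) (sum_le_sum fun t _ => ?_)
  rw [mul_assoc, ← Real.exp_add]
  exact mul_le_mul_of_nonneg_left (Real.exp_le_exp.2 (hsum t)) (hB i t)

lemma exists_logAct_eq_smul (hB : ∀ i t, 0 ≤ B i t) (hrow : ∀ i, ∃ t, 0 < B i t) {r : ℝ}
    (hr : q < r) : ∃ u : ι → ℝ, logAct B u = r • u := by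
  have hr0 : 0 < r := (Nat.cast_nonneg q).trans_lt hr
  have hf : ContractingWith (q / r).toNNReal fun u => r⁻¹ • logAct B u := by
    refine ⟨by rwa [Real.toNNReal_lt_one, div_lt_one hr0], LipschitzWith.of_dist_le_mul
      fun u v => ?_⟩
    rw [Real.coe_toNNReal _ (by positivity)]
    refine (dist_pi_le_iff (by positivity)).2 fun i => ?_
    rw [Pi.smul_apply, Pi.smul_apply, dist_smul₀, Real.norm_of_nonneg (inv_nonneg.2 hr0.le),
      inv_mul_eq_div, div_mul_eq_mul_div, div_le_div_iff_of_pos_right hr0, Real.dist_eq, abs_le]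
    have hvu := logAct_le_add_dist hB hrow v u i
    rw [dist_comm] at hvu
    constructor <;> linarith [logAct_le_add_dist hB hrow u v i]
  exact ⟨_, ((inv_smul_eq_iff₀ hr0.ne').1 (ContractingWith.fixedPoint_isFixedPt hf))⟩

lemma exists_pos_sum_mul_prod_eq_rpow (hB : ∀ i t, 0 ≤ B i t) (hrow : ∀ i, ∃ t, 0 < B i t)
    {r : ℝ} (hr : q < r) :
    ∃ x : ι → ℝ, (∀ i, 0 < x i) ∧ ∀ i, ∑ t, B i t * ∏ k, x (t k) = x i ^ r := by
  obtain ⟨u, hu⟩ := exists_logAct_eq_smul hB hrow hr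
  refine ⟨fun i => Real.exp (u i), fun i => Real.exp_pos _, fun i => ?_⟩
  have hi : logAct B u i = r * u i := congrFun hu i
  simp only [← Real.exp_sum]
  rw [← Real.exp_mul, mul_comm, ← hi, logAct, Real.exp_log (sum_mul_exp_pos hB hrow u i)]

lemma exists_rpow_eigenpair [Nonempty ι] (hB : ∀ i t, 0 ≤ B i t)
    (hrow : ∀ i, ∃ t, 0 < B i t) {r : ℝ} (hr : q < r) :
    ∃ (lam : ℝ) (y : ι → ℝ), (∀ i, 0 < y i ∧ y i ≤ 1) ∧ (∃ i, y i = 1) ∧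
      ∀ i, ∑ t, B i t * ∏ k, y (t k) = lam * y i ^ r := by
  obtain ⟨x, hx, hxr⟩ := exists_pos_sum_mul_prod_eq_rpow hB hrow hr
  obtain ⟨i₀, -, hi₀⟩ := exists_max_image univ x univ_nonempty
  have hM : 0 < x i₀ := hx i₀
  refine ⟨x i₀ ^ (r - q), fun i => x i / x i₀,
    fun i => ⟨div_pos (hx i) hM, div_le_one_of_le₀ (hi₀ i (mem_univ i)) hM.le⟩,
    ⟨i₀, div_self hM.ne'⟩, fun i => ?_⟩
  calc ∑ t, B i t * ∏ k, x (t k) / x i₀ = (∑ t, B i t * ∏ k, x (t k)) / x i₀ ^ (q : ℝ) := by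
        simp only [prod_div_distrib, Fin.prod_const, Real.rpow_natCast, sum_div, mul_div_assoc]
    _ = x i₀ ^ (r - q) * (x i / x i₀) ^ r := by
        rw [hxr, Real.div_rpow (hx i).le hM.le, Real.rpow_sub hM]
        field_simp

end LogCoordinates

section Tensor

variable {m n : ℕ} {A : Fin n → (Fin (m - 1) → Fin n) → ℝ}

def circuitMeans (m n : ℕ) (A : Fin n → (Fin (m - 1) → Fin n) → ℝ) : Set ℝ :=
  {r | ∃ (p : ℕ) (γ : ℕ → Fin n), IsCircuit (tArc m n A) p γ ∧
    r = (∏ j ∈ range p, sliceSum m n A (γ j)) ^ ((p : ℝ)⁻¹)}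

lemma sliceSum_nonneg (hA : ∀ i t, 0 ≤ A i t) (i : Fin n) : 0 ≤ sliceSum m n A i :=
  sum_nonneg fun t _ => hA i t

lemma prod_sliceSum_nonneg (hA : ∀ i t, 0 ≤ A i t) (p : ℕ) (γ : ℕ → Fin n) :
    0 ≤ ∏ j ∈ range p, sliceSum m n A (γ j) :=
  prod_nonneg fun _ _ => sliceSum_nonneg hA _

lemma circuitMeans_nonneg (hA : ∀ i t, 0 ≤ A i t) {r : ℝ} (hr : r ∈ circuitMeans m n A) :
    0 ≤ r := by
  obtain ⟨p, γ, -, rfl⟩ := hr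
  exact Real.rpow_nonneg (prod_sliceSum_nonneg hA p γ) _

lemma bddAbove_circuitMeans (hA : ∀ i t, 0 ≤ A i t) : BddAbove (circuitMeans m n A) := by
  refine ⟨∑ i, sliceSum m n A i, ?_⟩
  rintro r ⟨p, γ, hγ, rfl⟩
  have hK : ∀ i, sliceSum m n A i ≤ ∑ i, sliceSum m n A i := fun i =>
    single_le_sum (fun i _ => sliceSum_nonneg hA i) (mem_univ i)
  have hprod : ∏ j ∈ range p, sliceSum m n A (γ j) ≤ (∑ i, sliceSum m n A i) ^ (p : ℝ) := by
    rw [Real.rpow_natCast]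
    calc ∏ j ∈ range p, sliceSum m n A (γ j) ≤ ∏ _j ∈ range p, ∑ i, sliceSum m n A i :=
          prod_le_prod (fun j _ => sliceSum_nonneg hA _) fun _ _ => hK _
      _ = _ := by rw [prod_const, card_range]
  exact (Real.rpow_inv_le_iff_of_pos (prod_sliceSum_nonneg hA p γ)
    (sum_nonneg fun i _ => sliceSum_nonneg hA i) (by exact_mod_cast hγ.1)).2 hprod

lemma le_sSup_circuitMeans (hA : ∀ i t, 0 ≤ A i t) {p : ℕ} {γ : ℕ → Fin n}
    (hγ : IsCircuit (tArc m n A) p γ) {c : ℝ} (hc : 0 ≤ c)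
    (h : c ^ p ≤ ∏ j ∈ range p, sliceSum m n A (γ j)) : c ≤ sSup (circuitMeans m n A) := by
  refine le_csSup_of_le (bddAbove_circuitMeans hA) ⟨p, γ, hγ, rfl⟩ ?_
  rw [Real.le_rpow_inv_iff_of_pos hc (prod_sliceSum_nonneg hA p γ) (by exact_mod_cast hγ.1),
    Real.rpow_natCast]
  exact h

lemma sInf_circuitMeans_le (hA : ∀ i t, 0 ≤ A i t) {p : ℕ} {γ : ℕ → Fin n}
    (hγ : IsCircuit (tArc m n A) p γ) {c : ℝ} (hc : 0 ≤ c)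
    (h : ∏ j ∈ range p, sliceSum m n A (γ j) ≤ c ^ p) : sInf (circuitMeans m n A) ≤ c := by
  refine csInf_le_of_le ⟨0, fun r hr => circuitMeans_nonneg hA hr⟩ ⟨p, γ, hγ, rfl⟩ ?_
  rw [Real.rpow_inv_le_iff_of_pos (prod_sliceSum_nonneg hA p γ) hc (by exact_mod_cast hγ.1),
    Real.rpow_natCast]
  exact h

lemma circuitMeans_eq_empty (hirr : StronglyConnected (tArc m n A)) {i : Fin n}
    (hi : ∀ j, ¬ tArc m n A i j) : circuitMeans m n A = ∅ :=
  Set.eq_empty_of_forall_notMem fun _ ⟨p, γ, hγ, _⟩ =>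
    not_isCircuit_of_forall_not_arc hirr hi p γ hγ

lemma tArc_of_ne_zero (hm : 2 ≤ m) {i : Fin n} {t : Fin (m - 1) → Fin n} (ht : A i t ≠ 0) :
    tArc m n A i (t ⟨0, by omega⟩) :=
  ⟨t, ht, _, rfl⟩

lemma Ax_le_sliceSum_mul (hA : ∀ i t, 0 ≤ A i t) {y : Fin n → ℝ} (hy : ∀ i, 0 ≤ y i)
    {i j : Fin n} (hj : ∀ j', tArc m n A i j' → y j' ≤ y j) :
    Ax m n A y i ≤ sliceSum m n A i * y j ^ (m - 1) := by
  rw [Ax, sliceSum, sum_mul]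
  refine sum_le_sum fun t _ => ?_
  rcases eq_or_ne (A i t) 0 with h | h
  · simp [h]
  · rw [← Fin.prod_const]
    exact mul_le_mul_of_nonneg_left
      (prod_le_prod (fun k _ => hy _) fun k _ => hj _ ⟨t, h, k, rfl⟩) (hA i t)

lemma sliceSum_mul_le_Ax (hA : ∀ i t, 0 ≤ A i t) {y : Fin n → ℝ} (hy : ∀ i, 0 ≤ y i)
    {i j : Fin n} (hj : ∀ j', tArc m n A i j' → y j ≤ y j') :
    sliceSum m n A i * y j ^ (m - 1) ≤ Ax m n A y i := by
  rw [Ax, sliceSum, sum_mul]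
  refine sum_le_sum fun t _ => ?_
  rcases eq_or_ne (A i t) 0 with h | h
  · simp [h]
  · rw [← Fin.prod_const]
    exact mul_le_mul_of_nonneg_left
      (prod_le_prod (fun _ _ => hy _) fun k _ => hj _ ⟨t, h, k, rfl⟩) (hA i t)

lemma norm_mul_pow_le_Ax_norm (hA : ∀ i t, 0 ≤ A i t) {lam : ℂ} {x : Fin n → ℂ}
    (heq : ∀ i, ∑ t, (A i t : ℂ) * ∏ j, x (t j) = lam * x i ^ (m - 1)) (i : Fin n) :
    ‖lam‖ * ‖x i‖ ^ (m - 1) ≤ Ax m n A (fun j => ‖x j‖) i :=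
  calc ‖lam‖ * ‖x i‖ ^ (m - 1) = ‖∑ t, (A i t : ℂ) * ∏ j, x (t j)‖ := by
        rw [heq i, norm_mul, norm_pow]
    _ ≤ Ax m n A (fun j => ‖x j‖) i := (norm_sum_le _ _).trans <| sum_le_sum fun t _ => by
        rw [norm_mul, norm_prod, Complex.norm_real, Real.norm_of_nonneg (hA i t)]

lemma norm_le_sSup_circuitMeans (hm : 2 ≤ m) (hA : ∀ i t, 0 ≤ A i t) {lam : ℂ}
    (h : IsEig m n A lam) : ‖lam‖ ≤ sSup (circuitMeans m n A) := by
  obtain ⟨x, hx0, heq⟩ := h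
  set z : Fin n → ℝ := fun i => ‖x i‖
  have hz : ∀ i, 0 ≤ z i := fun i => norm_nonneg _
  have hlamz : ∀ i, ‖lam‖ * z i ^ (m - 1) ≤ Ax m n A z i := norm_mul_pow_le_Ax_norm hA heq
  rcases (norm_nonneg lam).eq_or_lt with h0 | hlam
  · rw [← h0]
    exact Real.sSup_nonneg fun _ hr => circuitMeans_nonneg hA hr
  have hsucc : ∀ i, ∃ j, 0 < z i → tArc m n A i j ∧ ∀ j', tArc m n A i j' → z j' ≤ z j := by
    intro i
    by_cases hzi : 0 < z i
    · obtain ⟨t, ht⟩ : ∃ t, A i t ≠ 0 := by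
        by_contra! hrow
        have hi := hlamz i
        simp only [Ax, hrow, zero_mul, sum_const_zero] at hi
        exact hi.not_gt (mul_pos hlam (pow_pos hzi _))
      obtain ⟨j, hj⟩ := exists_arc_forall_le z (tArc_of_ne_zero hm ht)
      exact ⟨j, fun _ => hj⟩
    · exact ⟨i, fun h => absurd h hzi⟩
  choose s hs using hsucc
  have hstep : ∀ i, 0 < z i → ‖lam‖ * z i ^ (m - 1) ≤ sliceSum m n A i * z (s i) ^ (m - 1) :=
    fun i hi => (hlamz i).trans (Ax_le_sliceSum_mul hA hz (hs i hi).2)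
  have hpos : ∀ i, 0 < z i → 0 < z (s i) := by
    intro i hi
    by_contra! hsi
    have h' := hstep i hi
    rw [le_antisymm hsi (hz _), zero_pow (by omega), mul_zero] at h'
    exact h'.not_gt (mul_pos hlam (pow_pos hi _))
  obtain ⟨i₀, hi₀⟩ : ∃ i, x i ≠ 0 := by
    by_contra! h
    exact hx0 (funext h)
  obtain ⟨p, γ, hγ, hγs⟩ :=
    exists_isCircuit_of_map s hpos (fun i hi => (hs i hi).1) (norm_pos_iff.2 hi₀)
  refine le_sSup_circuitMeans hA hγ hlam.le ?_
  simpa using prod_le_prod_of_mul_le_mul_succ (a := fun _ => ‖lam‖)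
    (b := fun j => sliceSum m n A (γ j)) (y := fun j => z (γ j) ^ (m - 1))
    (fun _ => hlam.le) (fun j => pow_pos (hγs j).1 _) (by rw [hγ.2.1])
    fun j _ => by rw [(hγs j).2]; exact hstep _ (hγs j).1

lemma specRad_nonneg : 0 ≤ specRad m n A :=
  Real.sSup_nonneg fun _ ⟨_, _, hr⟩ => hr ▸ norm_nonneg _

lemma specRad_le_sSup_circuitMeans (hm : 2 ≤ m) (hA : ∀ i t, 0 ≤ A i t) :
    specRad m n A ≤ sSup (circuitMeans m n A) :=
  Real.sSup_le (fun _ ⟨_, hlam, hr⟩ => hr ▸ norm_le_sSup_circuitMeans hm hA hlam)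
    (Real.sSup_nonneg fun _ hr => circuitMeans_nonneg hA hr)

lemma norm_le_specRad (hm : 2 ≤ m) (hA : ∀ i t, 0 ≤ A i t) {lam : ℂ} (h : IsEig m n A lam) :
    ‖lam‖ ≤ specRad m n A :=
  le_csSup ⟨_, fun _ ⟨_, hl, hr⟩ => hr ▸ norm_le_sSup_circuitMeans hm hA hl⟩ ⟨lam, h, rfl⟩

lemma Ax_nonneg (hA : ∀ i t, 0 ≤ A i t) {y : Fin n → ℝ} (hy : ∀ i, 0 ≤ y i) (i : Fin n) :
    0 ≤ Ax m n A y i :=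
  sum_nonneg fun t _ => mul_nonneg (hA i t) (prod_nonneg fun _ _ => hy _)

lemma continuous_Ax (i : Fin n) : Continuous fun y => Ax m n A y i := by
  unfold Ax
  fun_prop

lemma isEig_ofReal {lam : ℝ} {y : Fin n → ℝ} (hy : y ≠ 0)
    (h : ∀ i, Ax m n A y i = lam * y i ^ (m - 1)) : IsEig m n A lam := by
  refine ⟨fun i => y i, fun h0 => hy (funext fun i => by simpa using congrFun h0 i), fun i => ?_⟩
  have := congrArg ((↑) : ℝ → ℂ) (h i)
  push_cast [Ax] at this
  exact this

lemma sInf_circuitMeans_le_of_rpow_eigenpair (hn : 0 < n) (hA : ∀ i t, 0 ≤ A i t)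
    (hout : ∀ i, ∃ j, tArc m n A i j) {r : ℝ} (hr : ((m - 1 : ℕ) : ℝ) ≤ r) {lam : ℝ}
    {y : Fin n → ℝ} (hy : ∀ i, 0 < y i ∧ y i ≤ 1) (heq : ∀ i, Ax m n A y i = lam * y i ^ r) :
    sInf (circuitMeans m n A) ≤ lam := by
  choose s hs using fun i => (hout i).elim fun _ h => exists_arc_forall_le (fun j => -y j) h
  have hstep : ∀ i, sliceSum m n A i * y (s i) ^ r ≤ lam * y i ^ r := fun i =>
    calc sliceSum m n A i * y (s i) ^ r ≤ sliceSum m n A i * y (s i) ^ (m - 1) := by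
          rw [← Real.rpow_natCast]
          exact mul_le_mul_of_nonneg_left
            (Real.rpow_le_rpow_of_exponent_ge (hy _).1 (hy _).2 hr) (sliceSum_nonneg hA i)
      _ ≤ Ax m n A y i := sliceSum_mul_le_Ax hA (fun j => (hy j).1.le) fun j' h =>
          neg_le_neg_iff.1 ((hs i).2 j' h)
      _ = lam * y i ^ r := heq i
  obtain ⟨p, γ, hγ, hγs⟩ := exists_isCircuit_of_map (P := fun _ => True) s
    (fun _ _ => trivial) (fun i _ => (hs i).1) (i₀ := ⟨0, hn⟩) trivial
  have hlam : 0 ≤ lam := by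
    refine le_of_mul_le_mul_right ?_ (Real.rpow_pos_of_pos (hy (γ 0)).1 r)
    rw [zero_mul, ← heq]
    exact Ax_nonneg hA (fun j => (hy j).1.le) _
  refine sInf_circuitMeans_le hA hγ hlam ?_
  simpa using prod_le_prod_of_mul_le_mul_succ (a := fun j => sliceSum m n A (γ j))
    (b := fun _ => lam) (y := fun j => (y (γ j) ^ r)⁻¹) (fun _ => sliceSum_nonneg hA _)
    (fun j => inv_pos.2 (Real.rpow_pos_of_pos (hy _).1 r)) (by rw [hγ.2.1])
    fun j _ => by
      -- `hstep` runs against the direction of the walk, hence the inverted weights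
      rw [← div_eq_mul_inv, ← div_eq_mul_inv, div_le_div_iff₀ (Real.rpow_pos_of_pos (hy _).1 r)
        (Real.rpow_pos_of_pos (hy _).1 r), (hγs j).2]
      exact hstep _

lemma mem_Icc_of_Ax_eq_mul_rpow (hA : ∀ i t, 0 ≤ A i t) {y : Fin n → ℝ}
    (hy : ∀ i, 0 < y i ∧ y i ≤ 1) {i : Fin n} (hi : y i = 1) {lam r : ℝ}
    (heq : Ax m n A y i = lam * y i ^ r) : lam ∈ Set.Icc 0 (∑ i, sliceSum m n A i) := by
  rw [hi, Real.one_rpow, mul_one] at heq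
  refine ⟨heq ▸ Ax_nonneg hA (fun j => (hy j).1.le) i, ?_⟩
  calc lam ≤ sliceSum m n A i * y i ^ (m - 1) :=
        heq ▸ Ax_le_sliceSum_mul hA (fun j => (hy j).1.le) fun j' _ => hi ▸ (hy j').2
    _ ≤ ∑ i, sliceSum m n A i := by
        rw [hi, one_pow, mul_one]
        exact single_le_sum (fun i _ => sliceSum_nonneg hA i) (mem_univ i)

lemma Ax_eq_of_tendsto (hm : 2 ≤ m) {lam r : ℕ → ℝ} {y : ℕ → Fin n → ℝ} {lam' : ℝ}
    {y' : Fin n → ℝ} (hlam : Tendsto lam atTop (𝓝 lam')) (hy : Tendsto y atTop (𝓝 y'))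
    (hr : Tendsto r atTop (𝓝 ((m - 1 : ℕ) : ℝ)))
    (heq : ∀ k i, Ax m n A (y k) i = lam k * y k i ^ r k) (i : Fin n) :
    Ax m n A y' i = lam' * y' i ^ (m - 1) := by
  have hpow : Tendsto (fun k => y k i ^ r k) atTop (𝓝 (y' i ^ ((m - 1 : ℕ) : ℝ))) :=
    (Real.continuousAt_rpow (y' i, _) (Or.inr (Nat.cast_pos.2 (by omega)))).tendsto.comp
      ((continuous_apply i |>.tendsto _ |>.comp hy).prodMk_nhds hr)
  rw [← Real.rpow_natCast]
  refine tendsto_nhds_unique (((continuous_Ax i).tendsto y').comp hy) ?_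
  simpa only [Function.comp_def, heq] using hlam.mul hpow

lemma exists_isEig_ge_sInf_circuitMeans (hm : 2 ≤ m) (hn : 0 < n) (hA : ∀ i t, 0 ≤ A i t)
    (hout : ∀ i, ∃ j, tArc m n A i j) :
    ∃ lam : ℝ, sInf (circuitMeans m n A) ≤ lam ∧ IsEig m n A lam := by
  have : Nonempty (Fin n) := ⟨⟨0, hn⟩⟩
  have hrow : ∀ i, ∃ t, 0 < A i t := fun i =>
    let ⟨_, t, ht, _⟩ := hout i
    ⟨t, (hA i t).lt_of_ne' ht⟩
  set r : ℕ → ℝ := fun k => ((m - 1 : ℕ) : ℝ) + 1 / (k + 1)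
  have hr : ∀ k, ((m - 1 : ℕ) : ℝ) < r k := fun k => lt_add_of_pos_right _ (by positivity)
  choose lam y hy hy1 heq using fun k => exists_rpow_eigenpair hA hrow (hr k)
  replace heq : ∀ k i, Ax m n A (y k) i = lam k * y k i ^ r k := heq
  have hlow : ∀ k, sInf (circuitMeans m n A) ≤ lam k := fun k =>
    sInf_circuitMeans_le_of_rpow_eigenpair hn hA hout (hr k).le (hy k) (heq k)
  set S : Set (ℝ × (Fin n → ℝ)) :=
    Set.Icc (0, 0) (∑ i, sliceSum m n A i, 1) ∩ {p | ∃ i, p.2 i = 1}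
  have hS : IsCompact S := by
    refine isCompact_Icc.inter_right ?_
    simp only [Set.ofPred_exists]
    exact isClosed_iUnion_of_finite fun i =>
      isClosed_eq ((continuous_apply i).comp continuous_snd) continuous_const
  have hmem : ∀ k, (lam k, y k) ∈ S := by
    intro k
    obtain ⟨i, hi⟩ := hy1 k
    obtain ⟨hlam0, hlamK⟩ := mem_Icc_of_Ax_eq_mul_rpow hA (hy k) hi (heq k i)
    exact ⟨⟨⟨hlam0, fun j => (hy k j).1.le⟩, ⟨hlamK, fun j => (hy k j).2⟩⟩, i, hi⟩
  obtain ⟨⟨lam', y'⟩, ⟨-, i₁, hi₁⟩, φ, hφ, hlim⟩ := hS.tendsto_subseq hmem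
  have hlam' : Tendsto (lam ∘ φ) atTop (𝓝 lam') := (continuous_fst.tendsto _).comp hlim
  have hy' : Tendsto (y ∘ φ) atTop (𝓝 y') := (continuous_snd.tendsto _).comp hlim
  have hr' : Tendsto (r ∘ φ) atTop (𝓝 ((m - 1 : ℕ) : ℝ)) := by
    have h := (tendsto_const_nhds (x := ((m - 1 : ℕ) : ℝ))).add
      (tendsto_one_div_add_atTop_nhds_zero_nat.comp hφ.tendsto_atTop)
    rwa [add_zero] at h
  exact ⟨lam', ge_of_tendsto hlam' (Eventually.of_forall fun k => hlow (φ k)),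
    isEig_ofReal (y := y') (fun h => by simp [h] at hi₁)
      (Ax_eq_of_tendsto hm hlam' hy' hr' fun k => heq (φ k))⟩

end Tensor

theorem stmt2 (m n : ℕ) (hm : 2 ≤ m) (hn : 0 < n)
    (A : Fin n → (Fin (m - 1) → Fin n) → ℝ) (hA : ∀ i t, 0 ≤ A i t)
    (hirr : StronglyConnected (tArc m n A)) :
    sInf {r : ℝ | ∃ (p : ℕ) (γ : ℕ → Fin n), IsCircuit (tArc m n A) p γ ∧
        r = (∏ j ∈ Finset.range p, sliceSum m n A (γ j)) ^ ((p : ℝ)⁻¹)}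
      ≤ specRad m n A ∧
    specRad m n A ≤
      sSup {r : ℝ | ∃ (p : ℕ) (γ : ℕ → Fin n), IsCircuit (tArc m n A) p γ ∧
        r = (∏ j ∈ Finset.range p, sliceSum m n A (γ j)) ^ ((p : ℝ)⁻¹)} := by
  refine ⟨?_, specRad_le_sSup_circuitMeans hm hA⟩
  change sInf (circuitMeans m n A) ≤ _
  by_cases hout : ∀ i, ∃ j, tArc m n A i j
  · obtain ⟨lam, hle, hlam⟩ := exists_isEig_ge_sInf_circuitMeans hm hn hA hout
    calc sInf (circuitMeans m n A) ≤ lam := hle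
      _ ≤ ‖(lam : ℂ)‖ := by rw [Complex.norm_real]; exact Real.le_norm_self lam
      _ ≤ specRad m n A := norm_le_specRad hm hA hlam
  · obtain ⟨i, hi⟩ : ∃ i, ∀ j, ¬ tArc m n A i j := by simpa using hout
    rw [circuitMeans_eq_empty hirr hi, Real.sInf_empty]
    exact specRad_nonneg
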